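/- arXiv:1503.06363 — 11 statements merged into one kernel-verified Lean document; each statement's English description precedes it below -/
import Mathlib

section
/- Let E be a real vector space and Γ : E ⇉ E a set-valued map with finitely closed convex values. If Γ is a KKM map (i.e., for every finite subset A of the domain of Γ, the convex hull of A is contained in the union of the Γ(x) for x ∈ A), then for every finite subset A of the domain of Γ, the intersection of the convex hull of A with ⋂{Γ(x) : x ∈ A} is nonempty. -/
/-- A set `S` in a real vector space is *finitely closed* if its preimage under any
linear map from a Euclidean space `ℝⁿ` is closed (i.e. its intersection with every
finite-dimensional subspace is closed for the Euclidean topology). -/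
def FinitelyClosed {E : Type*} [AddCommGroup E] [Module ℝ E] (S : Set E) : Prop :=
  ∀ (n : ℕ) (f : (Fin n → ℝ) →ₗ[ℝ] E), IsClosed (f ⁻¹' S)

/-!
Pull the values of `Γ` back along `w ↦ ∑ a, w a • a` to the standard simplex on `A`, where they
become compact convex sets; by KKM they cover the simplex, so their union is convex. By induction
on `|A|`, any all-but-one of them meet. Berge's intersection theorem then says that all of them
meet. Berge's theorem is itself proved by induction: strictly separate `C j₀` from the
intersection of the other sets by a hyperplane and apply the induction hypothesis to the slices
of the other sets by that hyperplane; the slices again satisfy the hypotheses because a segment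
from a point of `C j₀` to a point of the intersection crosses the hyperplane.
-/

open Set

theorem FinitelyClosed.isClosed_preimage {E : Type*} [AddCommGroup E] [Module ℝ E] {S : Set E}
    (hS : FinitelyClosed S) {ι : Type*} [Fintype ι] (f : (ι → ℝ) →ₗ[ℝ] E) :
    IsClosed (f ⁻¹' S) := by
  let e := ContinuousLinearEquiv.piCongrLeft ℝ (fun _ : ι => ℝ) (Fintype.equivFin ι).symm
  convert (hS _ (f ∘ₗ (e : (Fin _ → ℝ) →ₗ[ℝ] ι → ℝ))).preimage e.symm.continuous using 1
  ext x
  simp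

theorem Finset.convexHull_eq_image_stdSimplex {E : Type*} [AddCommGroup E] [Module ℝ E]
    (A : Finset E) :
    convexHull ℝ (A : Set E) = Fintype.linearCombination ℝ ((↑) : A → E) '' stdSimplex ℝ A := by
  classical
  rw [← convexHull_basis_eq_stdSimplex, LinearMap.image_convexHull, ← Set.range_comp]
  congr 1
  ext x
  simp [Fintype.linearCombination_apply, Finset.sum_ite_eq]

section Berge

variable {V : Type*} [TopologicalSpace V] [AddCommGroup V] [Module ℝ V] [ContinuousSMul ℝ V]
  {ι : Type*} [DecidableEq ι]

theorem exists_mem_biUnion_of_separated [ContinuousAdd V] {s : Finset ι} {C : ι → Set V}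
    (hconv : ∀ i ∈ s, Convex ℝ (C i)) (hU : Convex ℝ (⋃ i ∈ s, C i))
    (herase : ∀ j ∈ s, ((⋃ i ∈ s, C i) ∩ ⋂ i ∈ s.erase j, C i).Nonempty)
    {j₀ j : ι} (hj₀ : j₀ ∈ s) (hj : j ∈ s.erase j₀) (f : V →L[ℝ] ℝ) (u : ℝ)
    (hlt : ∀ x ∈ C j₀, f x < u) (hgt : ∀ x ∈ ⋂ i ∈ s.erase j₀, C i, u < f x) :
    ∃ p ∈ ⋃ i ∈ s, C i, f p = u ∧ ∀ i ∈ (s.erase j₀).erase j, p ∈ C i := by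
  have hjs := Finset.mem_of_mem_erase hj
  obtain ⟨a, haU, haC⟩ := herase j hjs
  obtain ⟨b, -, hbC⟩ := herase j₀ hj₀
  have haj₀ : a ∈ C j₀ :=
    mem_iInter₂.1 haC j₀ (Finset.mem_erase.2 ⟨(Finset.ne_of_mem_erase hj).symm, hj₀⟩)
  have hbU : b ∈ ⋃ i ∈ s, C i := mem_biUnion hjs (mem_iInter₂.1 hbC j hj)
  obtain ⟨p, hpab, hpu⟩ := (convex_segment a b).isPreconnected.intermediate_value
    (left_mem_segment ℝ a b) (right_mem_segment ℝ a b) f.continuous.continuousOn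
    ⟨(hlt a haj₀).le, (hgt b hbC).le⟩
  refine ⟨p, hU.segment_subset haU hbU hpab, hpu, fun i hi => ?_⟩
  have hi₀ := Finset.mem_of_mem_erase hi
  have haCi : a ∈ C i := mem_iInter₂.1 haC i
    (Finset.mem_erase.2 ⟨Finset.ne_of_mem_erase hi, Finset.mem_of_mem_erase hi₀⟩)
  exact (hconv i (Finset.mem_of_mem_erase hi₀)).segment_subset haCi (mem_iInter₂.1 hbC i hi₀) hpab

/-- Berge's intersection theorem. Intersecting with the union in `herase` only matters when `s`
is a singleton, where it says that the single set is nonempty. -/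
theorem nonempty_biInter_of_convex_biUnion [IsTopologicalAddGroup V] [LocallyConvexSpace ℝ V]
    [T2Space V]
    (s : Finset ι) (C : ι → Set V)
    (hconv : ∀ i ∈ s, Convex ℝ (C i)) (hcomp : ∀ i ∈ s, IsCompact (C i))
    (hU : Convex ℝ (⋃ i ∈ s, C i))
    (herase : ∀ j ∈ s, ((⋃ i ∈ s, C i) ∩ ⋂ i ∈ s.erase j, C i).Nonempty) :
    (⋂ i ∈ s, C i).Nonempty := by
  induction s using Finset.strongInduction generalizing C with
  | H s ih =>
  obtain rfl | ⟨j₀, hj₀⟩ := s.eq_empty_or_nonempty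
  · simp
  obtain hs₀ | hs₀ := (s.erase j₀).eq_empty_or_nonempty
  · rw [← Finset.insert_erase hj₀, hs₀] at herase ⊢
    simpa using herase j₀ (by simp)
  set B := ⋂ i ∈ s.erase j₀, C i
  by_contra hempty
  have hdisj : Disjoint (C j₀) B := by
    rw [disjoint_iff_inter_eq_empty, ← not_nonempty_iff_eq_empty]
    rwa [← Finset.insert_erase hj₀, Finset.set_biInter_insert] at hempty
  obtain ⟨f, u, v, hu, huv, hv⟩ := geometric_hahn_banach_compact_closed (hconv j₀ hj₀)
    (hcomp j₀ hj₀) (convex_iInter₂ fun i hi => hconv i (Finset.mem_of_mem_erase hi))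
    (isClosed_biInter fun i hi => (hcomp i (Finset.mem_of_mem_erase hi)).isClosed) hdisj
  set H := {x | f x = u}
  have hH : Convex ℝ H := convex_hyperplane f.isLinear u
  have hU' : ⋃ i ∈ s.erase j₀, C i ∩ H = (⋃ i ∈ s, C i) ∩ H := by
    have hj₀H : C j₀ ∩ H = ∅ := eq_empty_of_forall_notMem fun x hx => (hu x hx.1).ne hx.2
    conv_rhs => rw [← Finset.insert_erase hj₀, Finset.set_biUnion_insert,
      union_inter_distrib_right, hj₀H, empty_union, iUnion₂_inter]
  obtain ⟨p, hp⟩ := ih (s.erase j₀) (Finset.erase_ssubset hj₀) (fun i => C i ∩ H)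
    (fun i hi => (hconv i (Finset.mem_of_mem_erase hi)).inter hH)
    (fun i hi => (hcomp i (Finset.mem_of_mem_erase hi)).inter_right
      (isClosed_eq f.continuous continuous_const))
    (hU' ▸ hU.inter hH) fun j hj => by
      obtain ⟨p, hpU, hpH, hpC⟩ := exists_mem_biUnion_of_separated hconv hU herase hj₀ hj f u hu
        fun x hx => huv.trans (hv x hx)
      exact ⟨p, hU' ▸ ⟨hpU, hpH⟩, mem_iInter₂.2 fun i hi => ⟨hpC i hi, hpH⟩⟩
  obtain ⟨i₁, hi₁⟩ := hs₀
  have hpB : p ∈ B := mem_iInter₂.2 fun i hi => (mem_iInter₂.1 hp i hi).1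
  have hpH : f p = u := (mem_iInter₂.1 hp i₁ hi₁).2
  linarith [hv p hpB]

end Berge

theorem nonempty_convexHull_inter_biInter_of_forall_erase {E : Type*} [AddCommGroup E]
    [Module ℝ E] [DecidableEq E] {Γ : E → Set E} {A : Finset E} (hA : A.Nonempty)
    (hconv : ∀ x ∈ A, Convex ℝ (Γ x)) (hfc : ∀ x ∈ A, FinitelyClosed (Γ x))
    (hcover : convexHull ℝ (A : Set E) ⊆ ⋃ x ∈ A, Γ x)
    (herase : ∀ j ∈ A, (convexHull ℝ (A : Set E) ∩ ⋂ x ∈ A.erase j, Γ x).Nonempty) :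
    (convexHull ℝ (A : Set E) ∩ ⋂ x ∈ A, Γ x).Nonempty := by
  classical
  set f := Fintype.linearCombination ℝ ((↑) : A → E)
  have himage := A.convexHull_eq_image_stdSimplex
  set C : E → Set (A → ℝ) := fun x => stdSimplex ℝ A ∩ f ⁻¹' Γ x
  have hU : ⋃ x ∈ A, C x = stdSimplex ℝ A := by
    refine subset_antisymm (iUnion₂_subset fun _ _ => inter_subset_left) fun c hc => ?_
    obtain ⟨x, hx, hfc⟩ := mem_iUnion₂.1 (hcover (himage ▸ mem_image_of_mem f hc))
    exact mem_biUnion hx ⟨hc, hfc⟩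
  obtain ⟨c, hc⟩ := nonempty_biInter_of_convex_biUnion A C
    (fun x hx => (convex_stdSimplex ℝ A).inter ((hconv x hx).linear_preimage f))
    (fun x hx => (isCompact_stdSimplex ℝ A).inter_right ((hfc x hx).isClosed_preimage f))
    (hU ▸ convex_stdSimplex ℝ A) fun j hj => by
      obtain ⟨q, hq, hqΓ⟩ := herase j hj
      rw [himage] at hq
      obtain ⟨c, hc, rfl⟩ := hq
      exact ⟨c, hU ▸ hc, mem_iInter₂.2 fun x hx => ⟨hc, mem_iInter₂.1 hqΓ x hx⟩⟩
  obtain ⟨x₀, hx₀⟩ := hA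
  exact ⟨f c, himage ▸ mem_image_of_mem f (mem_iInter₂.1 hc x₀ hx₀).1,
    mem_iInter₂.2 fun x hx => (mem_iInter₂.1 hc x hx).2⟩

/-- (KKM) ⇒ (FIP) for convex-valued maps with finitely closed values. -/
theorem convex_kkm_implies_fip {E : Type*} [AddCommGroup E] [Module ℝ E]
    (Γ : E → Set E)
    (hconv : ∀ x, Convex ℝ (Γ x))
    (hfc : ∀ x, FinitelyClosed (Γ x))
    (hKKM : ∀ A : Finset E, (↑A : Set E) ⊆ {x | (Γ x).Nonempty} →
      convexHull ℝ (↑A : Set E) ⊆ ⋃ x ∈ A, Γ x) :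
    ∀ A : Finset E, A.Nonempty → (↑A : Set E) ⊆ {x | (Γ x).Nonempty} →
      (convexHull ℝ (↑A : Set E) ∩ ⋂ x ∈ A, Γ x).Nonempty := by
  classical
  intro A
  induction A using Finset.strongInduction with
  | H A ih =>
  intro hA hdom
  refine nonempty_convexHull_inter_biInter_of_forall_erase hA (fun x _ => hconv x)
    (fun x _ => hfc x) (hKKM A hdom) fun j hj => ?_
  obtain hAj | hAj := (A.erase j).eq_empty_or_nonempty
  · simpa [hAj] using hA
  have hsub : A.erase j ⊆ A := Finset.erase_subset j A
  obtain ⟨q, hq, hqΓ⟩ := ih (A.erase j) (Finset.erase_ssubset hj) hAj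
    (subset_trans (Finset.coe_subset.2 hsub) hdom)
  exact ⟨q, convexHull_mono (Finset.coe_subset.2 hsub) hq, hqΓ⟩
end

section
/- Let E be a real vector space and Γ : E ⇉ E a set-valued map with convex values. If for every finite subset A of the domain of Γ, the intersection [A] ∩ ⋂{Γ(x) : x ∈ A} is nonempty, then Γ is a KKM map: for every finite subset A of the domain of Γ, the convex hull [A] is contained in ⋃{Γ(x) : x ∈ A}. -/
/-!
Induct on `A`. Given `y ∈ [A]`, the finite intersection property provides `z ∈ [A]` lying in
every `Γ x`, `x ∈ A`. Unless `y = z`, the ray from `z` through `y` leaves `[A]` through a facet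
`[A \ {a}]`, at a point `w` with `y ∈ [w, z]`. By induction `w ∈ Γ b` for some `b ∈ A \ {a}`;
as also `z ∈ Γ b`, convexity of `Γ b` gives `y ∈ Γ b`.
-/

open Finset

/-- The witness is the largest `t` keeping all weights nonnegative,
`t = min {l i / (m i - l i) | l i < m i}`. -/
lemma Finset.exists_extrapolation_nonneg_eq_zero {ι : Type*} (s : Finset ι) (l m : ι → ℝ)
    (hl : ∀ i ∈ s, 0 ≤ l i) (hlt : ∃ i ∈ s, l i < m i) :
    ∃ t : ℝ, 0 ≤ t ∧ (∀ i ∈ s, 0 ≤ (1 + t) * l i - t * m i) ∧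
      ∃ i ∈ s, (1 + t) * l i - t * m i = 0 := by
  classical
  obtain ⟨i₀, hi₀, hmin⟩ := (s.filter fun i => l i < m i).exists_min_image
    (fun i => l i / (m i - l i)) (by simpa [Finset.Nonempty] using hlt)
  rw [mem_filter] at hi₀
  have hgap : 0 < m i₀ - l i₀ := sub_pos.2 hi₀.2
  have ht : 0 ≤ l i₀ / (m i₀ - l i₀) := div_nonneg (hl i₀ hi₀.1) hgap.le
  refine ⟨_, ht, fun i hi => ?_, i₀, hi₀.1, by field_simp; ring⟩
  rcases lt_or_ge (l i) (m i) with hi_lt | hi_ge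
  · have hle := hmin i (mem_filter.2 ⟨hi, hi_lt⟩)
    rw [div_le_div_iff₀ hgap (sub_pos.2 hi_lt)] at hle
    have : l i₀ / (m i₀ - l i₀) * (m i - l i) ≤ l i := by
      rw [div_mul_eq_mul_div, div_le_iff₀ hgap]; linarith
    linarith
  · nlinarith [hl i hi]

lemma Finset.exists_mem_segment_convexHull_erase {E : Type*} [AddCommGroup E] [Module ℝ E]
    [DecidableEq E] {A : Finset E} {y z : E} (hy : y ∈ convexHull ℝ (A : Set E))
    (hz : z ∈ convexHull ℝ (A : Set E)) (hyz : y ≠ z) :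
    ∃ a ∈ A, ∃ w ∈ convexHull ℝ (A.erase a : Set E), y ∈ segment ℝ w z := by
  obtain ⟨l, hl₀, hl₁, rfl⟩ := Finset.mem_convexHull'.1 hy
  obtain ⟨m, -, hm₁, rfl⟩ := Finset.mem_convexHull'.1 hz
  have hlt : ∃ i ∈ A, l i < m i := by
    by_contra! hge
    have hsum : ∑ i ∈ A, (l i - m i) = 0 := by simp [sum_sub_distrib, hl₁, hm₁]
    have heq := (sum_eq_zero_iff_of_nonneg fun i hi => sub_nonneg.2 (hge i hi)).1 hsum
    exact hyz (sum_congr rfl fun i hi => by rw [sub_eq_zero.1 (heq i hi)])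
  obtain ⟨t, ht, hν₀, a, ha, hνa⟩ := A.exists_extrapolation_nonneg_eq_zero l m hl₀ hlt
  set ν := fun i => (1 + t) * l i - t * m i
  replace hνa : ν a = 0 := hνa
  have hw_mem : ∑ i ∈ A, ν i • i ∈ convexHull ℝ (A.erase a : Set E) := by
    refine Finset.mem_convexHull'.2 ⟨ν, fun i hi => hν₀ i (mem_of_mem_erase hi), ?_,
      sum_erase _ (by rw [hνa, zero_smul])⟩
    rw [sum_erase _ hνa]
    simp [ν, sum_sub_distrib, ← mul_sum, hl₁, hm₁]
  have hw : ∑ i ∈ A, ν i • i =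
      (1 + t) • ∑ i ∈ A, l i • i - t • ∑ i ∈ A, m i • i := by
    simp only [ν, sub_smul, mul_smul, sum_sub_distrib, ← smul_sum]
  refine ⟨a, ha, _, hw_mem, (1 + t)⁻¹, t / (1 + t), by positivity, by positivity,
    by field_simp, ?_⟩
  rw [hw]
  match_scalars
  · field_simp
  · ring

/-- (FIP) ⇒ (KKM) for convex-valued maps. -/
theorem fip_implies_convex_kkm {E : Type*} [AddCommGroup E] [Module ℝ E]
    (Γ : E → Set E)
    (hconv : ∀ x, Convex ℝ (Γ x))
    (hFIP : ∀ A : Finset E, A.Nonempty → (↑A : Set E) ⊆ {x | (Γ x).Nonempty} →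
      (convexHull ℝ (↑A : Set E) ∩ ⋂ x ∈ A, Γ x).Nonempty) :
    ∀ A : Finset E, (↑A : Set E) ⊆ {x | (Γ x).Nonempty} →
      convexHull ℝ (↑A : Set E) ⊆ ⋃ x ∈ A, Γ x := by
  classical
  intro A
  induction A using Finset.strongInduction with | _ A ih
  intro hdom y hy
  have hA : A.Nonempty := by simpa using (convexHull_nonempty_iff (𝕜 := ℝ)).1 ⟨y, hy⟩
  obtain ⟨z, hzA, hzΓ⟩ := hFIP A hA hdom
  rw [Set.mem_iInter₂] at hzΓ
  rw [Set.mem_iUnion₂]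
  obtain rfl | hyz := eq_or_ne y z
  · obtain ⟨a, ha⟩ := hA
    exact ⟨a, ha, hzΓ a ha⟩
  obtain ⟨a, ha, w, hw, hyw⟩ := A.exists_mem_segment_convexHull_erase hy hzA hyz
  obtain ⟨b, hb, hwb⟩ := Set.mem_iUnion₂.1 <|
    ih _ (erase_ssubset ha) ((coe_subset.2 (erase_subset a A)).trans hdom) hw
  have hbA := mem_of_mem_erase hb
  exact ⟨b, hbA, (hconv b).segment_subset hwb (hzΓ b hbA) hyw⟩
end

section
/- Let E be a real locally convex topological vector space with dual E*, and T : E ⇉ E* a monotone operator. Then the map Γ_T : E ⇉ E defined by Γ_T(y) = {x ∈ E : ⟨y*, y − x⟩ ≥ 0 for all y* ∈ T(y)} is a KKM map: for every finite subset {y_1,…,y_n} ⊆ D(T) and every convex combination x_0 = Σ λ_i y_i, there exists i with x_0 ∈ Γ_T(y_i). -/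
/-!
Suppose every `Γ_T(yᵢ)` misses `x₀`, witnessed by `fᵢ ∈ T(yᵢ)` with `fᵢ(yᵢ - x₀) < 0`. Then
`S = ∑ᵢ λᵢ fᵢ(yᵢ - x₀) < 0`. On the other hand, writing `yᵢ - x₀ = ∑ⱼ λⱼ (yᵢ - yⱼ)` and
symmetrizing the resulting double sum gives `2 S = ∑ᵢ ∑ⱼ λᵢ λⱼ (fᵢ - fⱼ)(yᵢ - yⱼ) ≥ 0`
by monotonicity.
-/

open Finset

section ConvexCombination

variable {𝕜 E ι : Type*} [AddCommGroup E] [Fintype ι]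

theorem sub_sum_smul_eq_sum_smul_sub [Ring 𝕜] [Module 𝕜 E] {l : ι → 𝕜} (hl : ∑ i, l i = 1)
    (y : ι → E) (a : E) : a - ∑ j, l j • y j = ∑ j, l j • (a - y j) := by
  simp only [smul_sub, sum_sub_distrib, ← sum_smul, hl, one_smul]

theorem two_mul_sum_sum_eq_sum_sum_sub_apply_sub [CommRing 𝕜] [Module 𝕜 E] (l : ι → 𝕜)
    (y : ι → E) (f : ι → Module.Dual 𝕜 E) :
    2 * ∑ i, ∑ j, l i * l j * f i (y i - y j) =
      ∑ i, ∑ j, l i * l j * (f i - f j) (y i - y j) := by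
  have hswap : ∑ i, ∑ j, l i * l j * f i (y i - y j) =
      ∑ i, ∑ j, -(l i * l j * f j (y i - y j)) := by
    rw [sum_comm]
    refine sum_congr rfl fun i _ => sum_congr rfl fun j _ => ?_
    rw [← neg_sub, map_neg]
    ring
  rw [two_mul]
  nth_rewrite 2 [hswap]
  simp only [← sum_add_distrib, LinearMap.sub_apply, mul_sub, ← sub_eq_add_neg]

variable [Field 𝕜] [LinearOrder 𝕜] [IsStrictOrderedRing 𝕜] [Module 𝕜 E]

theorem sum_mul_apply_sub_sum_smul_nonneg {l : ι → 𝕜} (hl₀ : ∀ i, 0 ≤ l i)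
    (hl : ∑ i, l i = 1) {y : ι → E} {f : ι → Module.Dual 𝕜 E}
    (hmono : ∀ i j, 0 ≤ (f i - f j) (y i - y j)) :
    0 ≤ ∑ i, l i * f i (y i - ∑ j, l j • y j) := by
  have hexpand : ∑ i, l i * f i (y i - ∑ j, l j • y j) =
      ∑ i, ∑ j, l i * l j * f i (y i - y j) := by
    simp only [sub_sum_smul_eq_sum_smul_sub hl, map_sum, map_smul, smul_eq_mul, mul_sum, mul_assoc]
  have htwice : 0 ≤ 2 * ∑ i, ∑ j, l i * l j * f i (y i - y j) := by
    rw [two_mul_sum_sum_eq_sum_sum_sub_apply_sub]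
    exact sum_nonneg fun i _ => sum_nonneg fun j _ =>
      mul_nonneg (mul_nonneg (hl₀ i) (hl₀ j)) (hmono i j)
  rw [hexpand]
  linarith

theorem exists_apply_sub_sum_smul_nonneg {l : ι → 𝕜} (hl₀ : ∀ i, 0 ≤ l i)
    (hl : ∑ i, l i = 1) {y : ι → E} {f : ι → Module.Dual 𝕜 E}
    (hmono : ∀ i j, 0 ≤ (f i - f j) (y i - y j)) :
    ∃ i, 0 ≤ f i (y i - ∑ j, l j • y j) := by
  by_contra! hneg
  obtain ⟨i₀, -, hi₀⟩ : ∃ i ∈ univ, (0 : ι → 𝕜) i < l i :=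
    exists_lt_of_sum_lt (by simp [hl])
  have hsum_neg : ∑ i, l i * f i (y i - ∑ j, l j • y j) < 0 :=
    sum_neg' (fun i _ => mul_nonpos_of_nonneg_of_nonpos (hl₀ i) (hneg i).le)
      ⟨i₀, mem_univ _, mul_neg_of_pos_of_neg hi₀ (hneg i₀)⟩
  exact hsum_neg.not_ge (sum_mul_apply_sub_sum_smul_nonneg hl₀ hl hmono)

end ConvexCombination

theorem monotone_implies_gammaT_kkm_general {E : Type*} [AddCommGroup E] [Module ℝ E]
    [TopologicalSpace E]
    (T : E → Set (E →L[ℝ] ℝ))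
    (hT : ∀ x y (x' y' : E →L[ℝ] ℝ), x' ∈ T x → y' ∈ T y → 0 ≤ (y' - x') (y - x)) :
    ∀ (n : ℕ), 0 < n → ∀ (y : Fin n → E), (∀ i, (T (y i)).Nonempty) →
      ∀ (l : Fin n → ℝ), (∀ i, 0 ≤ l i) → (∑ i, l i) = 1 →
        ∀ (x₀ : E), x₀ = ∑ i, l i • y i →
          ∃ i, ∀ y' ∈ T (y i), 0 ≤ y' (y i - x₀) := by
  rintro n - y - l hl₀ hl x₀ rfl
  by_contra! hmiss
  choose f hfT hneg using hmiss
  obtain ⟨i, hi⟩ := exists_apply_sub_sum_smul_nonneg hl₀ hl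
    (f := fun i => (f i : Module.Dual ℝ E)) fun i j => hT _ _ _ _ (hfT j) (hfT i)
  exact (hneg i).not_ge hi

/-- If `T : E ⇉ E*` is monotone, then the map `Γ_T(y) = {x : ⟨y*, y - x⟩ ≥ 0, ∀ y* ∈ T y}`
is a KKM map: every convex combination `x₀` of points `y₁, …, yₙ` of `D(T)` belongs to
some `Γ_T(yᵢ)`. -/
theorem monotone_implies_gammaT_kkm {E : Type*} [AddCommGroup E] [Module ℝ E]
    [TopologicalSpace E] [IsTopologicalAddGroup E] [ContinuousSMul ℝ E]
    [LocallyConvexSpace ℝ E]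
    (T : E → Set (E →L[ℝ] ℝ))
    (hT : ∀ x y (x' y' : E →L[ℝ] ℝ), x' ∈ T x → y' ∈ T y → 0 ≤ (y' - x') (y - x)) :
    ∀ (n : ℕ), 0 < n → ∀ (y : Fin n → E), (∀ i, (T (y i)).Nonempty) →
      ∀ (l : Fin n → ℝ), (∀ i, 0 ≤ l i) → (∑ i, l i) = 1 →
        ∀ (x₀ : E), x₀ = ∑ i, l i • y i →
          ∃ i, ∀ y' ∈ T (y i), 0 ≤ y' (y i - x₀) :=
  monotone_implies_gammaT_kkm_general T hT
end

section
/- Let E be a real locally convex topological vector space with dual E*, and T : E ⇉ E*. If the map Γ_T(y) = {x ∈ E : ⟨y*, y − x⟩ ≥ 0 for all y* ∈ T(y)} is a KKM map, then T is quasimonotone: for all (x,x*), (y,y*) ∈ T, max{⟨x*, x − y⟩, ⟨y*, y − x⟩} ≥ 0. -/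
/-!
Apply the KKM property to the pair `{x, y}`: the midpoint `m` of `x` and `y` lies in `Γ_T(x)` or in
`Γ_T(y)`. Since `x - m = ½ (x - y)` and `y - m = ½ (y - x)`, this gives `0 ≤ x' (x - y)` or
`0 ≤ y' (y - x)`.
-/

theorem midpoint_mem_or_of_convexHull_pair_subset {E : Type*} [AddCommGroup E] [Module ℝ E]
    [DecidableEq E] {Γ : E → Set E} {x y : E}
    (h : convexHull ℝ (↑({x, y} : Finset E) : Set E) ⊆ ⋃ z ∈ ({x, y} : Finset E), Γ z) :
    midpoint ℝ x y ∈ Γ x ∨ midpoint ℝ x y ∈ Γ y := by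
  have hmid : midpoint ℝ x y ∈ convexHull ℝ (↑({x, y} : Finset E) : Set E) := by
    rw [Finset.coe_pair, convexHull_pair]
    exact midpoint_mem_segment x y
  simpa only [Set.mem_iUnion, Finset.mem_insert, Finset.mem_singleton, exists_prop,
    exists_eq_or_imp, exists_eq_left] using h hmid

theorem apply_sub_midpoint_nonneg_iff {E F : Type*} [AddCommGroup E] [Module ℝ E]
    [FunLike F E ℝ] [LinearMapClass F ℝ E ℝ] (f : F) (x y : E) :
    0 ≤ f (x - midpoint ℝ x y) ↔ 0 ≤ f (x - y) := by
  rw [left_sub_midpoint, map_smul, smul_eq_mul, invOf_eq_inv]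
  exact mul_nonneg_iff_of_pos_left (by norm_num)

theorem gammaT_kkm_implies_quasimonotone_general {E : Type*} [AddCommGroup E] [Module ℝ E]
    [TopologicalSpace E]
    (T : E → Set (E →L[ℝ] ℝ))
    (hKKM : ∀ A : Finset E, (↑A : Set E) ⊆ {x | (T x).Nonempty} →
      convexHull ℝ (↑A : Set E) ⊆
        ⋃ y ∈ A, {x : E | ∀ y' ∈ T y, 0 ≤ y' (y - x)}) :
    ∀ x y (x' y' : E →L[ℝ] ℝ), x' ∈ T x → y' ∈ T y →
      0 ≤ max (x' (x - y)) (y' (y - x)) := by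
  classical
  intro x y x' y' hx' hy'
  have hdom : (↑({x, y} : Finset E) : Set E) ⊆ {x | (T x).Nonempty} := by
    rw [Finset.coe_pair, Set.pair_subset_iff]
    exact ⟨⟨x', hx'⟩, ⟨y', hy'⟩⟩
  rcases midpoint_mem_or_of_convexHull_pair_subset (hKKM {x, y} hdom) with hx | hy
  · exact le_max_of_le_left ((apply_sub_midpoint_nonneg_iff x' x y).1 (hx x' hx'))
  · rw [midpoint_comm] at hy
    exact le_max_of_le_right ((apply_sub_midpoint_nonneg_iff y' y x).1 (hy y' hy'))

/-- If the map `Γ_T(y) = {x : ⟨y*, y - x⟩ ≥ 0, ∀ y* ∈ T y}` is a KKM map, then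
`T` is quasimonotone. -/
theorem gammaT_kkm_implies_quasimonotone {E : Type*} [AddCommGroup E] [Module ℝ E]
    [TopologicalSpace E] [IsTopologicalAddGroup E] [ContinuousSMul ℝ E]
    [LocallyConvexSpace ℝ E]
    (T : E → Set (E →L[ℝ] ℝ))
    (hKKM : ∀ A : Finset E, (↑A : Set E) ⊆ {x | (T x).Nonempty} →
      convexHull ℝ (↑A : Set E) ⊆
        ⋃ y ∈ A, {x : E | ∀ y' ∈ T y, 0 ≤ y' (y - x)}) :
    ∀ x y (x' y' : E →L[ℝ] ℝ), x' ∈ T x → y' ∈ T y →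
      0 ≤ max (x' (x - y)) (y' (y - x)) :=
  gammaT_kkm_implies_quasimonotone_general T hKKM
end

section
/- Let E be a real locally convex topological vector space with dual E*, and T : E ⇉ E*. Then T is monotone if and only if for every x* ∈ E*, the translated operator x ↦ T(x) − x* is quasimonotone. -/
/-!
Pairing `x' - z` against `x - y` and `y' - z` against `y - x` and adding, the translation `z`
cancels and what remains is `⟨y' - x', y - x⟩`. So monotonicity makes the sum of the two
quantities in the quasimonotonicity condition nonnegative, whence their maximum is. Conversely,
if `⟨y' - x', y - x⟩ = -2ε < 0`, a continuous functional with prescribed value on `y - x`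
(Hahn–Banach) gives `z` with `⟨x' - z, y - x⟩ = ε`, and then both quantities equal `-ε`.
-/

section

variable {E : Type*} [AddCommGroup E] [Module ℝ E] [TopologicalSpace E]

lemma translate_apply_add_translate_apply (x' y' z : E →L[ℝ] ℝ) (x y : E) :
    (x' - z) (x - y) + (y' - z) (y - x) = (y' - x') (y - x) := by
  simp only [sub_apply, map_sub]
  ring

lemma max_translate_apply_nonneg {x y : E} {x' y' : E →L[ℝ] ℝ} (h : 0 ≤ (y' - x') (y - x))
    (z : E →L[ℝ] ℝ) : 0 ≤ max ((x' - z) (x - y)) ((y' - z) (y - x)) := by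
  have hsum := translate_apply_add_translate_apply x' y' z x y
  linarith [le_max_left ((x' - z) (x - y)) ((y' - z) (y - x)),
    le_max_right ((x' - z) (x - y)) ((y' - z) (y - x))]

lemma exists_max_translate_apply_neg [SeparatingDual ℝ E] {x y : E} {x' y' : E →L[ℝ] ℝ}
    (h : (y' - x') (y - x) < 0) :
    ∃ z : E →L[ℝ] ℝ, max ((x' - z) (x - y)) ((y' - z) (y - x)) < 0 := by
  have hne : y - x ≠ 0 := fun h0 ↦ by simp [h0] at h
  obtain ⟨f, hf⟩ := SeparatingDual.exists_eq_one (R := ℝ) hne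
  set ε := -(y' - x') (y - x) / 2 with hε
  have hx : (x' - (x' - ε • f)) (x - y) = -ε := by
    rw [sub_sub_cancel, ← neg_sub, map_neg, smul_apply, hf, smul_eq_mul,
      mul_one]
  have hy : (y' - (x' - ε • f)) (y - x) = -ε := by
    have hsum := translate_apply_add_translate_apply x' y' (x' - ε • f) x y
    linarith
  exact ⟨x' - ε • f, by rw [hx, hy, max_self]; linarith⟩

end

/-- `T` is monotone iff for every `x* ∈ E*` the translated operator `x ↦ T x - x*`
is quasimonotone. -/
theorem monotone_iff_translates_quasimonotone {E : Type*} [AddCommGroup E] [Module ℝ E]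
    [TopologicalSpace E] [IsTopologicalAddGroup E] [ContinuousSMul ℝ E]
    [LocallyConvexSpace ℝ E] [T2Space E]
    (T : E → Set (E →L[ℝ] ℝ)) :
    (∀ x y (x' y' : E →L[ℝ] ℝ), x' ∈ T x → y' ∈ T y → 0 ≤ (y' - x') (y - x)) ↔
    (∀ z : E →L[ℝ] ℝ, ∀ x y (x' y' : E →L[ℝ] ℝ), x' ∈ T x → y' ∈ T y →
      0 ≤ max ((x' - z) (x - y)) ((y' - z) (y - x))) := by
  constructor
  · intro hmono z x y x' y' hx hy
    exact max_translate_apply_nonneg (hmono x y x' y' hx hy) z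
  · intro hquasi x y x' y' hx hy
    by_contra! hneg
    obtain ⟨z, hz⟩ := exists_max_translate_apply_neg hneg
    exact hz.not_ge (hquasi z x y x' y' hx hy)
end

section
/- Let E be a real locally convex topological vector space with dual E*, and T : E ⇉ E*. Then T is monotone if and only if for every x* ∈ E*, the map Γ_{T−x*} : E ⇉ E, Γ_{T−x*}(y) = {x ∈ E : ⟨y* − x*, y − x⟩ ≥ 0 for all y* ∈ T(y)}, is a KKM map; i.e., for every x* ∈ E*, every finite set {x_1,…,x_m} ⊆ D(T), and every x̄ in the convex hull of {x_1,…,x_m}, there exists i such that ⟨x_i* − x*, x_i − x̄⟩ ≥ 0 for all x_i* ∈ T(x_i). -/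
/-!
For a monotone family `(xᵢ, gᵢ)` and a convex combination `x̄ = ∑ wⱼ xⱼ`, the identity
`∑ᵢ wᵢ gᵢ(xᵢ - x̄) = ½ ∑ᵢ ∑ⱼ wᵢ wⱼ (gᵢ - gⱼ)(xᵢ - xⱼ) ≥ 0` forces some `gᵢ(xᵢ - x̄) ≥ 0`;
since `T - x*` is monotone along with `T`, this is the KKM property of `Γ_{T-x*}`.
Conversely, the KKM property for `{x, y}`, the midpoint of `x, y` and `x* = (x' + y') / 2`
leaves, at either vertex, exactly `¼ (y' - x')(y - x) ≥ 0`.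
-/

section ConvexCombination

variable {𝕜 E ι : Type*} [CommRing 𝕜] [AddCommGroup E] [Module 𝕜 E]
  {s : Finset ι} {x : ι → E} {g : ι → E →ₗ[𝕜] 𝕜} {w : ι → 𝕜}

theorem sum_mul_apply_sub_sum_smul_eq (hw₁ : ∑ i ∈ s, w i = 1) :
    ∑ i ∈ s, w i * g i (x i - ∑ j ∈ s, w j • x j) =
      ∑ i ∈ s, ∑ j ∈ s, w i * w j * g i (x i - x j) := by
  refine Finset.sum_congr rfl fun i _ => ?_
  have hsplit : x i - ∑ j ∈ s, w j • x j = ∑ j ∈ s, w j • (x i - x j) := by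
    simp only [smul_sub, Finset.sum_sub_distrib, ← Finset.sum_smul, hw₁, one_smul]
  simp only [hsplit, map_sum, map_smul, smul_eq_mul, Finset.mul_sum, mul_assoc]

theorem two_mul_sum_sum_mul_apply_sub_eq :
    2 * ∑ i ∈ s, ∑ j ∈ s, w i * w j * g i (x i - x j) =
      ∑ i ∈ s, ∑ j ∈ s, w i * w j * (g i - g j) (x i - x j) := by
  have hswap : ∑ i ∈ s, ∑ j ∈ s, w i * w j * g i (x i - x j) =
      ∑ i ∈ s, ∑ j ∈ s, w j * w i * g j (x j - x i) := Finset.sum_comm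
  rw [two_mul]
  nth_rewrite 2 [hswap]
  simp only [← Finset.sum_add_distrib]
  refine Finset.sum_congr rfl fun i _ => Finset.sum_congr rfl fun j _ => ?_
  rw [← neg_sub (x i) (x j), map_neg, LinearMap.sub_apply]
  ring

variable [LinearOrder 𝕜] [IsStrictOrderedRing 𝕜]

theorem sum_mul_apply_sub_sum_smul_nonneg_s6 (hg : ∀ i ∈ s, ∀ j ∈ s, 0 ≤ (g i - g j) (x i - x j))
    (hw₀ : ∀ i ∈ s, 0 ≤ w i) (hw₁ : ∑ i ∈ s, w i = 1) :
    0 ≤ ∑ i ∈ s, w i * g i (x i - ∑ j ∈ s, w j • x j) := by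
  rw [sum_mul_apply_sub_sum_smul_eq hw₁]
  have hdouble : 0 ≤ 2 * ∑ i ∈ s, ∑ j ∈ s, w i * w j * g i (x i - x j) := by
    rw [two_mul_sum_sum_mul_apply_sub_eq]
    exact Finset.sum_nonneg fun i hi => Finset.sum_nonneg fun j hj =>
      mul_nonneg (mul_nonneg (hw₀ i hi) (hw₀ j hj)) (hg i hi j hj)
  linarith

theorem exists_apply_sub_sum_smul_nonneg_s6 (hg : ∀ i ∈ s, ∀ j ∈ s, 0 ≤ (g i - g j) (x i - x j))
    (hw₀ : ∀ i ∈ s, 0 ≤ w i) (hw₁ : ∑ i ∈ s, w i = 1) :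
    ∃ i ∈ s, 0 ≤ g i (x i - ∑ j ∈ s, w j • x j) := by
  by_contra! hneg
  obtain ⟨i₀, hi₀, hwi₀⟩ : ∃ i ∈ s, 0 < w i := by
    by_contra! hw
    linarith [Finset.sum_nonpos hw]
  have hsum : ∑ i ∈ s, w i * g i (x i - ∑ j ∈ s, w j • x j) < ∑ i ∈ s, 0 :=
    Finset.sum_lt_sum (fun i hi => mul_nonpos_of_nonneg_of_nonpos (hw₀ i hi) (hneg i hi).le)
      ⟨i₀, hi₀, mul_neg_of_pos_of_neg hwi₀ (hneg i₀ hi₀)⟩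
  rw [Finset.sum_const_zero] at hsum
  exact hsum.not_ge (sum_mul_apply_sub_sum_smul_nonneg_s6 hg hw₀ hw₁)

end ConvexCombination

theorem sub_midpoint_apply_sub_midpoint {E : Type*} [AddCommGroup E] [Module ℝ E]
    [TopologicalSpace E] (x' y' : E →L[ℝ] ℝ) (x y : E) :
    (x' - midpoint ℝ x' y') (x - midpoint ℝ x y) = (y' - x') (y - x) / 4 := by
  simp only [midpoint_eq_smul_add, invOf_eq_inv, sub_apply, smul_apply,
    add_apply, map_sub, map_add, map_smul, smul_eq_mul]
  ring

theorem exists_forall_apply_sub_sum_smul_nonneg_of_monotone {E : Type*} [AddCommGroup E]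
    [Module ℝ E] [TopologicalSpace E] {T : E → Set (E →L[ℝ] ℝ)}
    (hT : ∀ x y (x' y' : E →L[ℝ] ℝ), x' ∈ T x → y' ∈ T y → 0 ≤ (y' - x') (y - x))
    (z : E →L[ℝ] ℝ) {A : Finset E} {w : E → ℝ} (hw₀ : ∀ y ∈ A, 0 ≤ w y)
    (hw₁ : ∑ y ∈ A, w y = 1) :
    ∃ y ∈ A, ∀ y' ∈ T y, 0 ≤ (y' - z) (y - ∑ j ∈ A, w j • j) := by
  by_contra! hneg
  choose! f hfT hf using hneg
  obtain ⟨i, hi, hnn⟩ := exists_apply_sub_sum_smul_nonneg_s6 (x := id)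
    (g := fun y => ((f y - z : E →L[ℝ] ℝ) : E →ₗ[ℝ] ℝ))
    (fun i hi j hj => by simpa using hT j i (f j) (f i) (hfT j hj) (hfT i hi)) hw₀ hw₁
  exact (hf i hi).not_ge hnn

theorem monotone_iff_gamma_kkm_general {E : Type*} [AddCommGroup E] [Module ℝ E]
    [TopologicalSpace E]
    (T : E → Set (E →L[ℝ] ℝ)) :
    (∀ x y (x' y' : E →L[ℝ] ℝ), x' ∈ T x → y' ∈ T y → 0 ≤ (y' - x') (y - x)) ↔
    (∀ z : E →L[ℝ] ℝ, ∀ A : Finset E, (↑A : Set E) ⊆ {x | (T x).Nonempty} →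
      convexHull ℝ (↑A : Set E) ⊆
        ⋃ y ∈ A, {x : E | ∀ y' ∈ T y, 0 ≤ (y' - z) (y - x)}) := by
  constructor
  · intro hmono z A _ _ hx
    obtain ⟨w, hw₀, hw₁, rfl⟩ := Finset.mem_convexHull'.1 hx
    obtain ⟨y, hy, hyT⟩ := exists_forall_apply_sub_sum_smul_nonneg_of_monotone hmono z hw₀ hw₁
    exact Set.mem_iUnion₂_of_mem hy hyT
  · classical
    intro hkkm x y x' y' hx' hy'
    have hD : (↑({x, y} : Finset E) : Set E) ⊆ {p | (T p).Nonempty} := by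
      rw [Finset.coe_pair, Set.insert_subset_iff, Set.singleton_subset_iff]
      exact ⟨⟨x', hx'⟩, y', hy'⟩
    have hmid : midpoint ℝ x y ∈ convexHull ℝ (↑({x, y} : Finset E) : Set E) :=
      segment_subset_convexHull (by simp) (by simp) (midpoint_mem_segment x y)
    obtain ⟨p, hp, hpT⟩ := Set.mem_iUnion₂.1 (hkkm (midpoint ℝ x' y') {x, y} hD hmid)
    rw [Finset.mem_insert, Finset.mem_singleton] at hp
    rcases hp with rfl | rfl
    · have h := hpT x' hx'
      rw [sub_midpoint_apply_sub_midpoint] at h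
      linarith
    · have h := hpT y' hy'
      rw [midpoint_comm (R := ℝ) x', midpoint_comm (R := ℝ) x,
        sub_midpoint_apply_sub_midpoint] at h
      simp only [sub_apply, map_sub] at h ⊢
      linarith

/-- `T` is monotone iff for every `x* ∈ E*` the map
`Γ_{T-x*}(y) = {x : ⟨y* - x*, y - x⟩ ≥ 0, ∀ y* ∈ T y}` is a KKM map. -/
theorem monotone_iff_gamma_kkm {E : Type*} [AddCommGroup E] [Module ℝ E]
    [TopologicalSpace E] [IsTopologicalAddGroup E] [ContinuousSMul ℝ E]
    [LocallyConvexSpace ℝ E] [T2Space E]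
    (T : E → Set (E →L[ℝ] ℝ)) :
    (∀ x y (x' y' : E →L[ℝ] ℝ), x' ∈ T x → y' ∈ T y → 0 ≤ (y' - x') (y - x)) ↔
    (∀ z : E →L[ℝ] ℝ, ∀ A : Finset E, (↑A : Set E) ⊆ {x | (T x).Nonempty} →
      convexHull ℝ (↑A : Set E) ⊆
        ⋃ y ∈ A, {x : E | ∀ y' ∈ T y, 0 ≤ (y' - z) (y - x)}) :=
  monotone_iff_gamma_kkm_general T
end

section
/- Let E be a real locally convex topological vector space with dual E*, and T : E ⇉ E*. Then T is monotone if and only if for every x* ∈ E* and every finite subset {(x_1,x_1*),…,(x_m,x_m*)} of the graph of T, there exists x̄ in the convex hull of {x_1,…,x_m} such that ⟨x_i* − x*, x_i − x̄⟩ ≥ 0 for every i. -/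
/-!
For `x* = z` and points `(xᵢ, xᵢ*)` of the graph, consider the matrix game with payoff
`A i j = ⟨xᵢ* - z, xᵢ - xⱼ⟩`. Monotonicity makes `A + Aᵀ` entrywise nonnegative, so `μᵀ A μ ≥ 0`
on the standard simplex, and von Neumann's minimax theorem yields a mixed strategy `λ` with
`A λ ≥ 0`; the point `x̄ = ∑ λⱼ xⱼ` is the required one. Conversely, two graph points tested
against the midpoint of their functionals give back the monotonicity inequality.
-/

namespace Matrix

theorem exists_mem_stdSimplex_mulVec_nonneg {ι : Type*} [Fintype ι] [Nonempty ι]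
    (A : Matrix ι ι ℝ) (hA : ∀ μ ∈ stdSimplex ℝ ι, 0 ≤ μ ⬝ᵥ A *ᵥ μ) :
    ∃ l ∈ stdSimplex ℝ ι, 0 ≤ A *ᵥ l := by
  classical
  let B : (ι → ℝ) →ₗ[ℝ] (ι → ℝ) →ₗ[ℝ] ℝ := (dotProductBilin ℝ ℝ).compl₂ A.mulVecLin
  have hS : (stdSimplex ℝ ι).Nonempty := ⟨_, single_mem_stdSimplex ℝ (Classical.arbitrary ι)⟩
  obtain ⟨a, ha, b, hb, hsaddle⟩ := Sion.exists_isSaddlePointOn (f := fun μ l => B μ l)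
    hS (convex_stdSimplex ℝ ι) (isCompact_stdSimplex ℝ ι)
    (fun l _ =>
      (B.flip l).continuous_of_finiteDimensional.lowerSemicontinuous.lowerSemicontinuousOn _)
    (fun l _ => ((B.flip l).convexOn (convex_stdSimplex ℝ ι)).quasiconvexOn)
    (convex_stdSimplex ℝ ι) hS (isCompact_stdSimplex ℝ ι)
    (fun μ _ => (B μ).continuous_of_finiteDimensional.upperSemicontinuous.upperSemicontinuousOn _)
    (fun μ _ => ((B μ).concaveOn (convex_stdSimplex ℝ ι)).quasiconcaveOn)
  refine ⟨b, hb, fun i => ?_⟩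
  calc (0 : ℝ) ≤ B a a := by simpa [B] using hA a ha
    _ ≤ B (Pi.single i 1) b := hsaddle _ (single_mem_stdSimplex ℝ i) a ha
    _ = (A *ᵥ b) i := by simp [B]

theorem dotProduct_mulVec_nonneg_of_add_transpose_nonneg {ι : Type*} [Fintype ι]
    {A : Matrix ι ι ℝ} (hA : ∀ i j, 0 ≤ A i j + A j i) {μ : ι → ℝ} (hμ : 0 ≤ μ) :
    0 ≤ μ ⬝ᵥ A *ᵥ μ := by
  have hsymm : μ ⬝ᵥ (A + Aᵀ) *ᵥ μ = 2 * (μ ⬝ᵥ A *ᵥ μ) := by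
    rw [add_mulVec, dotProduct_add, mulVec_transpose, dotProduct_comm μ (μ ᵥ* A),
      ← dotProduct_mulVec]
    ring
  have hpos : 0 ≤ μ ⬝ᵥ (A + Aᵀ) *ᵥ μ :=
    Finset.sum_nonneg fun i _ => mul_nonneg (hμ i) <|
      Finset.sum_nonneg fun j _ => mul_nonneg (hA i j) (hμ j)
  linarith

end Matrix

section Minty

open Matrix Set

variable {E ι : Type*} [AddCommGroup E] [Module ℝ E] [Fintype ι]

def mintyMatrix (x : ι → E) (φ : ι → E →ₗ[ℝ] ℝ) : Matrix ι ι ℝ :=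
  Matrix.of fun i j => φ i (x i - x j)

theorem mintyMatrix_mulVec (x : ι → E) (φ : ι → E →ₗ[ℝ] ℝ) {l : ι → ℝ} (hl : ∑ j, l j = 1)
    (i : ι) : (mintyMatrix x φ *ᵥ l) i = φ i (x i - ∑ j, l j • x j) := by
  simp only [mintyMatrix, mulVec, dotProduct, of_apply, map_sub, map_sum, map_smul, smul_eq_mul,
    sub_mul, Finset.sum_sub_distrib, ← Finset.mul_sum, hl, mul_one, mul_comm (l _)]

theorem exists_mem_convexHull_forall_apply_sub_nonneg [Nonempty ι] (x : ι → E)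
    (φ : ι → E →ₗ[ℝ] ℝ) (hmono : ∀ i j, 0 ≤ (φ i - φ j) (x i - x j)) :
    ∃ xb ∈ convexHull ℝ (range x), ∀ i, 0 ≤ φ i (x i - xb) := by
  have hA : ∀ i j, 0 ≤ mintyMatrix x φ i j + mintyMatrix x φ j i := fun i j => by
    have := hmono i j
    simp only [mintyMatrix, of_apply, map_sub, LinearMap.sub_apply] at this ⊢
    linarith
  obtain ⟨l, hl, hAl⟩ := (mintyMatrix x φ).exists_mem_stdSimplex_mulVec_nonneg
    fun μ hμ => dotProduct_mulVec_nonneg_of_add_transpose_nonneg hA hμ.1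
  refine ⟨∑ j, l j • x j, (convex_convexHull ℝ _).sum_mem (fun j _ => hl.1 j) hl.2
    fun j _ => subset_convexHull ℝ _ (mem_range_self j), fun i => ?_⟩
  rw [← mintyMatrix_mulVec x φ hl.2]
  exact hAl i

end Minty

theorem monotone_iff_finite_minty_general {E : Type*} [AddCommGroup E] [Module ℝ E]
    [TopologicalSpace E]
    (T : E → Set (E →L[ℝ] ℝ)) :
    (∀ x y (x' y' : E →L[ℝ] ℝ), x' ∈ T x → y' ∈ T y → 0 ≤ (y' - x') (y - x)) ↔
    (∀ z : E →L[ℝ] ℝ, ∀ (m : ℕ), 0 < m → ∀ (x : Fin m → E) (x' : Fin m → E →L[ℝ] ℝ),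
      (∀ i, x' i ∈ T (x i)) →
      ∃ xb ∈ convexHull ℝ (Set.range x), ∀ i, 0 ≤ (x' i - z) (x i - xb)) := by
  constructor
  · intro hmono z m hm x x' hx
    have : Nonempty (Fin m) := ⟨⟨0, hm⟩⟩
    refine exists_mem_convexHull_forall_apply_sub_nonneg x (fun i => (x' i - z).toLinearMap)
      fun i j => ?_
    simpa using hmono (x j) (x i) (x' j) (x' i) (hx j) (hx i)
  · intro hminty x y x' y' hx hy
    obtain ⟨xb, -, hxb⟩ := hminty ((2⁻¹ : ℝ) • (x' + y')) 2 two_pos ![x, y] ![x', y']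
      (Fin.forall_fin_two.2 ⟨hx, hy⟩)
    have hsum : (y' - x') (y - x) = 2 * ((x' - (2⁻¹ : ℝ) • (x' + y')) (x - xb)
        + (y' - (2⁻¹ : ℝ) • (x' + y')) (y - xb)) := by
      simp only [sub_apply, map_sub, smul_add, add_apply, smul_apply, smul_eq_mul]
      ring
    have h0 := hxb 0
    have h1 := hxb 1
    simp only [Matrix.cons_val_zero, Matrix.cons_val_one] at h0 h1
    linarith

/-- `T` is monotone iff for every `x* ∈ E*` and every finite subset
`{(xᵢ, xᵢ*)}` of the graph of `T`, there is `xb` in the convex hull of the `xᵢ`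
with `⟨xᵢ* - x*, xᵢ - xb⟩ ≥ 0` for all `i`. -/
theorem monotone_iff_finite_minty {E : Type*} [AddCommGroup E] [Module ℝ E]
    [TopologicalSpace E] [IsTopologicalAddGroup E] [ContinuousSMul ℝ E]
    [LocallyConvexSpace ℝ E] [T2Space E]
    (T : E → Set (E →L[ℝ] ℝ)) :
    (∀ x y (x' y' : E →L[ℝ] ℝ), x' ∈ T x → y' ∈ T y → 0 ≤ (y' - x') (y - x)) ↔
    (∀ z : E →L[ℝ] ℝ, ∀ (m : ℕ), 0 < m → ∀ (x : Fin m → E) (x' : Fin m → E →L[ℝ] ℝ),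
      (∀ i, x' i ∈ T (x i)) →
      ∃ xb ∈ convexHull ℝ (Set.range x), ∀ i, 0 ≤ (x' i - z) (x i - xb)) :=
  monotone_iff_finite_minty_general T
end

section
/- Let E be a real locally convex topological vector space with dual E*, and T : E ⇉ E*. Then T is monotone if and only if for every x* ∈ E* and every two points (x_1,x_1*), (x_2,x_2*) in the graph of T, there exists x̄ on the segment [x_1,x_2] such that ⟨x_1* − x*, x_1 − x̄⟩ ≥ 0 and ⟨x_2* − x*, x_2 − x̄⟩ ≥ 0. -/
/-! If `⟨x₂* − x₁*, x₂ − x₁⟩ ≥ 0`, one of the two endpoints of the segment already solves the Minty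
inequalities. Conversely, if `c = ⟨x₂* − x₁*, x₂ − x₁⟩ < 0`, choose `f ∈ E*` with
`f (x₂ − x₁) = 1` (Hahn–Banach) and test with `x* = x₁* + (c/2) f`: at the point
`x₁ + t (x₂ − x₁)` the two Minty expressions are `(c/2) t` and `(c/2) (1 − t)`, which cannot both
be nonnegative. -/

section SegmentMinty

variable {E : Type*} [AddCommGroup E] [Module ℝ E] [TopologicalSpace E]

theorem segment_minty_of_nonneg_apply_sub {x₁ x₂ : E} {x₁' x₂' : E →L[ℝ] ℝ}
    (hmono : 0 ≤ (x₂' - x₁') (x₂ - x₁)) (z : E →L[ℝ] ℝ) :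
    ∃ xb ∈ segment ℝ x₁ x₂, 0 ≤ (x₁' - z) (x₁ - xb) ∧ 0 ≤ (x₂' - z) (x₂ - xb) := by
  by_cases h₂ : 0 ≤ (x₂' - z) (x₂ - x₁)
  · exact ⟨x₁, left_mem_segment ℝ x₁ x₂, by simp, h₂⟩
  · refine ⟨x₂, right_mem_segment ℝ x₁ x₂, ?_, by simp⟩
    have : (x₁' - z) (x₁ - x₂) = (x₂' - x₁') (x₂ - x₁) - (x₂' - z) (x₂ - x₁) := by
      simp only [sub_apply, map_sub]
      ring
    linarith

theorem nonneg_apply_sub_of_segment_minty [SeparatingDual ℝ E] {x₁ x₂ : E}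
    {x₁' x₂' : E →L[ℝ] ℝ}
    (h : ∀ z : E →L[ℝ] ℝ,
      ∃ xb ∈ segment ℝ x₁ x₂, 0 ≤ (x₁' - z) (x₁ - xb) ∧ 0 ≤ (x₂' - z) (x₂ - xb)) :
    0 ≤ (x₂' - x₁') (x₂ - x₁) := by
  by_contra! hneg
  set c := (x₂' - x₁') (x₂ - x₁) with hc
  have hne : x₂ - x₁ ≠ 0 := fun h0 => by simp [c, h0] at hneg
  obtain ⟨f, hf⟩ := SeparatingDual.exists_eq_one (R := ℝ) hne
  obtain ⟨xb, hxb, h₁, h₂⟩ := h (x₁' + (c / 2) • f)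
  rw [segment_eq_image'] at hxb
  obtain ⟨t, -, rfl⟩ := hxb
  have e₁ : (x₁' - (x₁' + (c / 2) • f)) (x₁ - (x₁ + t • (x₂ - x₁))) = c / 2 * t := by
    simp [hf]
  have e₂ : (x₂' - (x₁' + (c / 2) • f)) (x₂ - (x₁ + t • (x₂ - x₁))) = c / 2 * (1 - t) := by
    have : x₂ - (x₁ + t • (x₂ - x₁)) = (1 - t) • (x₂ - x₁) := by module
    simp only [this, map_smul, sub_apply, add_apply, smul_apply, hf, hc, smul_eq_mul]
    ring
  linarith

end SegmentMinty

/-- `T` is monotone iff for every `x* ∈ E*` and every two points of the graph of `T`,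
the Minty inequality has a solution on the segment joining them. -/
theorem monotone_iff_segment_minty {E : Type*} [AddCommGroup E] [Module ℝ E]
    [TopologicalSpace E] [IsTopologicalAddGroup E] [ContinuousSMul ℝ E]
    [LocallyConvexSpace ℝ E] [T2Space E]
    (T : E → Set (E →L[ℝ] ℝ)) :
    (∀ x y (x' y' : E →L[ℝ] ℝ), x' ∈ T x → y' ∈ T y → 0 ≤ (y' - x') (y - x)) ↔
    (∀ z : E →L[ℝ] ℝ, ∀ x₁ x₂ (x₁' x₂' : E →L[ℝ] ℝ), x₁' ∈ T x₁ → x₂' ∈ T x₂ →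
      ∃ xb ∈ segment ℝ x₁ x₂,
        0 ≤ (x₁' - z) (x₁ - xb) ∧ 0 ≤ (x₂' - z) (x₂ - xb)) :=
  ⟨fun hmono z _ _ _ _ h₁ h₂ => segment_minty_of_nonneg_apply_sub (hmono _ _ _ _ h₁ h₂) z,
    fun hminty _ _ _ _ h₁ h₂ =>
      nonneg_apply_sub_of_segment_minty fun z => hminty z _ _ _ _ h₁ h₂⟩
end

section
/- Let E be a finite-dimensional normed real vector space, n ≥ 2, and G_1,…,G_n closed convex subsets of E such that the union ⋃_i G_i is convex and for each j there exists y_j ∈ ⋂_{i≠j} G_i. Then ⋂_{i=1}^n G_i ≠ ∅. -/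
/-!
Let `f x = maxᵢ d(x, Gᵢ)` and let `x` minimise `f` over the compact convex hull `K` of the
points `yⱼ`. Since `K ⊆ ⋃ᵢ Gᵢ`, the minimiser lies in some `G_k`. If `f x > 0`, move from `x`
towards `y_k`: by convexity of `d(·, Gᵢ)` the distances to the `Gᵢ` with `i ≠ k`, which contain
`y_k`, drop to at most `(1 - t) f x`, while the distance to `G_k` vanishes at `x` and so stays
small for small `t`. This contradicts minimality, so `f x = 0` and `x` lies in every `Gᵢ`.
-/

open Metric Set Filter Topology

section

variable {E : Type*} [SeminormedAddCommGroup E] [NormedSpace ℝ E]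

theorem Convex.convexOn_infDist {s : Set E} (hs : Convex ℝ s) :
    ConvexOn ℝ univ (infDist · s) := by
  refine ⟨convex_univ, fun x _ y _ a b ha hb hab => ?_⟩
  rcases s.eq_empty_or_nonempty with rfl | hne
  · simp
  refine le_of_forall_pos_le_add fun ε hε => ?_
  obtain ⟨p, hp, hxp⟩ := (infDist_lt_iff hne).1 (lt_add_of_pos_right (infDist x s) hε)
  obtain ⟨q, hq, hyq⟩ := (infDist_lt_iff hne).1 (lt_add_of_pos_right (infDist y s) hε)
  calc infDist (a • x + b • y) s ≤ dist (a • x + b • y) (a • p + b • q) :=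
        infDist_le_dist_of_mem (hs hp hq ha hb hab)
    _ ≤ a * dist x p + b * dist y q := by
        refine (dist_add_add_le _ _ _ _).trans_eq ?_
        rw [dist_smul₀, dist_smul₀, Real.norm_of_nonneg ha, Real.norm_of_nonneg hb]
    _ ≤ a * (infDist x s + ε) + b * (infDist y s + ε) := by
        gcongr
    _ = a * infDist x s + b * infDist y s + ε := by linear_combination ε * hab

theorem exists_mem_segment_forall_infDist_lt {ι : Type*} {G : ι → Set E}
    (hG : ∀ i, Convex ℝ (G i)) {x y : E} {k : ι} (hx : x ∈ G k) (hy : ∀ i, i ≠ k → y ∈ G i)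
    {m : ℝ} (hm : 0 < m) (hxm : ∀ i, infDist x (G i) ≤ m) :
    ∃ z ∈ segment ℝ x y, ∀ i, infDist z (G i) < m := by
  have hnear : ∀ᶠ t in 𝓝[>] (0 : ℝ), infDist ((1 - t) • x + t • y) (G k) < m := by
    have hcont : Continuous fun t : ℝ => infDist ((1 - t) • x + t • y) (G k) :=
      (continuous_infDist_pt _).comp (by fun_prop)
    have hat0 : infDist ((1 - 0 : ℝ) • x + (0 : ℝ) • y) (G k) < m := by
      simpa [infDist_zero_of_mem hx] using hm
    exact nhdsWithin_le_nhds ((hcont.tendsto 0).eventually (gt_mem_nhds hat0))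
  obtain ⟨t, hnear, ht0, ht1⟩ := (hnear.and (Ioc_mem_nhdsGT one_pos)).exists
  refine ⟨(1 - t) • x + t • y, ⟨1 - t, t, by linarith, ht0.le, by ring, rfl⟩, fun i => ?_⟩
  rcases eq_or_ne i k with rfl | hik
  · exact hnear
  calc infDist ((1 - t) • x + t • y) (G i)
      ≤ (1 - t) * infDist x (G i) + t * infDist y (G i) :=
        (hG i).convexOn_infDist.2 trivial trivial (by linarith) ht0.le (by ring)
    _ ≤ (1 - t) * m := by
        rw [infDist_zero_of_mem (hy i hik), mul_zero, add_zero]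
        exact mul_le_mul_of_nonneg_left (hxm i) (by linarith)
    _ < m := by nlinarith

theorem exists_mem_convexHull_forall_infDist_eq_zero {ι : Type*} [Fintype ι] [Nonempty ι]
    {G : ι → Set E} (hG : ∀ i, Convex ℝ (G i)) (y : ι → E)
    (hcover : convexHull ℝ (range y) ⊆ ⋃ i, G i) (hy : ∀ j i, i ≠ j → y j ∈ G i) :
    ∃ x ∈ convexHull ℝ (range y), ∀ i, infDist x (G i) = 0 := by
  let f : E → ℝ := fun z => Finset.univ.sup' Finset.univ_nonempty fun i => infDist z (G i)
  have hf : ∀ z i, infDist z (G i) ≤ f z := fun z i =>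
    Finset.le_sup' (fun i => infDist z (G i)) (Finset.mem_univ i)
  have hyK : ∀ j, y j ∈ convexHull ℝ (range y) := fun j =>
    subset_convexHull ℝ _ (mem_range_self j)
  have hfc : Continuous f :=
    Continuous.finset_sup'_apply _ fun i _ => continuous_infDist_pt (G i)
  obtain ⟨x, hxK, hmin⟩ := ((finite_range y).isCompact_convexHull ℝ).exists_isMinOn
    ⟨_, hyK (Classical.arbitrary ι)⟩ hfc.continuousOn
  refine ⟨x, hxK, fun i => le_antisymm ((hf x i).trans (not_lt.1 fun hpos => ?_)) infDist_nonneg⟩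
  obtain ⟨k, hk⟩ := mem_iUnion.1 (hcover hxK)
  obtain ⟨z, hz, hzlt⟩ := exists_mem_segment_forall_infDist_lt hG hk (hy k) hpos (hf x)
  have hzK := (convex_convexHull ℝ _).segment_subset hxK (hyK k) hz
  exact (hmin hzK).not_gt ((Finset.sup'_lt_iff _).2 fun i _ => hzlt i)

end

theorem closed_convex_union_inter_nonempty_general {E : Type*} [NormedAddCommGroup E]
    [NormedSpace ℝ E]
    (n : ℕ) (hn : 2 ≤ n) (G : Fin n → Set E)
    (hclosed : ∀ i, IsClosed (G i))
    (hconv : ∀ i, Convex ℝ (G i))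
    (hunion : Convex ℝ (⋃ i, G i))
    (hy : ∀ j, ∃ y : E, ∀ i, i ≠ j → y ∈ G i) :
    (⋂ i, G i).Nonempty := by
  have : Nontrivial (Fin n) := Fin.nontrivial_iff_two_le.mpr hn
  choose y hy using hy
  have hcover : convexHull ℝ (range y) ⊆ ⋃ i, G i :=
    convexHull_min (range_subset_iff.2 fun j =>
      mem_iUnion.2 ((exists_ne j).imp (hy j))) hunion
  obtain ⟨x, -, hx⟩ := exists_mem_convexHull_forall_infDist_eq_zero hconv y hcover hy
  refine ⟨x, mem_iInter.2 fun i => ((hclosed i).mem_iff_infDist_zero ?_).2 (hx i)⟩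
  obtain ⟨j, hj⟩ := exists_ne i
  exact ⟨y j, hy j i hj.symm⟩

/-- Inductive step of the elementary proof of the convex KKM principle:
if `G₁, …, Gₙ` (`n ≥ 2`) are closed convex sets in a finite-dimensional normed real
vector space whose union is convex and such that for each `j` some point lies in all
the `Gᵢ`, `i ≠ j`, then the `Gᵢ` have a common point. -/
theorem closed_convex_union_inter_nonempty {E : Type*} [NormedAddCommGroup E]
    [NormedSpace ℝ E] [FiniteDimensional ℝ E]
    (n : ℕ) (hn : 2 ≤ n) (G : Fin n → Set E)
    (hclosed : ∀ i, IsClosed (G i))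
    (hconv : ∀ i, Convex ℝ (G i))
    (hunion : Convex ℝ (⋃ i, G i))
    (hy : ∀ j, ∃ y : E, ∀ i, i ≠ j → y ∈ G i) :
    (⋂ i, G i).Nonempty :=
  closed_convex_union_inter_nonempty_general n hn G hclosed hconv hunion hy
end

section
/- Let E be a real vector space, T : E ⇉ E* monotone, and for (x,y) ∈ E × D(T) define g(x,y) = sup{⟨y*, x − y⟩ : y* ∈ T(y)}. Then for every finite subset {y_1,…,y_n} ⊆ D(T) and every convex combination x_0 = Σ λ_i y_i with λ_i ≥ 0, Σ λ_i = 1, there exists i ∈ {1,…,n} with g(x_0, y_i) ≤ 0. -/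
/-- If `T : E ⇉ E*` is monotone and `g(x, y) = sup {⟨y*, x - y⟩ : y* ∈ T y}`, then for
every convex combination `x₀ = Σ λᵢ yᵢ` of points of `D(T)` there is `i` with
`g(x₀, yᵢ) ≤ 0`, i.e. `⟨y*, x₀ - yᵢ⟩ ≤ 0` for all `y* ∈ T (yᵢ)`. -/
theorem monotone_convex_combination_g_nonpos {E : Type*} [AddCommGroup E] [Module ℝ E]
    (T : E → Set (Module.Dual ℝ E))
    (hT : ∀ x y (x' y' : Module.Dual ℝ E), x' ∈ T x → y' ∈ T y →
      0 ≤ (y' - x') (y - x)) :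
    ∀ (n : ℕ), 0 < n → ∀ (y : Fin n → E), (∀ i, (T (y i)).Nonempty) →
      ∀ (l : Fin n → ℝ), (∀ i, 0 ≤ l i) → (∑ i, l i) = 1 →
        ∀ (x₀ : E), x₀ = ∑ i, l i • y i →
          ∃ i, ∀ y' ∈ T (y i), y' (x₀ - y i) ≤ 0 := by
  intro n hn y hTy l hl hsum x₀ hx₀
  by_contra h
  push_neg at h
  choose Y hY hpos using h
  have hx : ∀ i, x₀ - y i = ∑ j, l j • (y j - y i) := by
    intro i
    rw [hx₀]
    simp only [smul_sub]
    rw [Finset.sum_sub_distrib, ← Finset.sum_smul, hsum, one_smul]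
  have key : ∀ i, (Y i) (x₀ - y i) = ∑ j, l j * (Y i) (y j - y i) := by
    intro i
    rw [hx i, map_sum]
    exact Finset.sum_congr rfl fun j _ => by rw [map_smul]; rfl
  set S := ∑ i, l i * (Y i) (x₀ - y i) with hS
  have hSpos : 0 < S := by
    obtain ⟨i, hi⟩ : ∃ i, 0 < l i := by
      by_contra hc
      push_neg at hc
      have h0 : ∑ i, l i = 0 := Finset.sum_eq_zero fun i _ => le_antisymm (hc i) (hl i)
      rw [h0] at hsum; norm_num at hsum
    exact Finset.sum_pos' (fun j _ => mul_nonneg (hl j) (hpos j).le)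
      ⟨i, Finset.mem_univ i, mul_pos hi (hpos i)⟩
  have hS2 : S = ∑ i, ∑ j, l i * (l j * (Y i) (y j - y i)) := by
    rw [hS]
    exact Finset.sum_congr rfl fun i _ => by rw [key i, Finset.mul_sum]
  have hSle : S + S ≤ 0 := by
    rw [hS2]
    nth_rewrite 2 [Finset.sum_comm (f := fun i j => l i * (l j * (Y i) (y j - y i)))]
    rw [← Finset.sum_add_distrib]
    apply Finset.sum_nonpos
    intro i _
    rw [← Finset.sum_add_distrib]
    apply Finset.sum_nonpos
    intro j _
    have hmono := hT (y i) (y j) (Y i) (Y j) (hY i) (hY j)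
    have e1 : (Y j) (y i - y j) = -((Y j) (y j - y i)) := by
      rw [← map_neg]; congr 1; abel
    have e2 : ((Y j) - (Y i)) (y j - y i) = (Y j) (y j - y i) - (Y i) (y j - y i) := rfl
    rw [e2] at hmono
    rw [e1]
    nlinarith [mul_nonneg (hl i) (hl j)]
  linarith
end

section
/- Let E be a real topological vector space with dual E*, T : E ⇉ E*, x* ∈ E*, and K ⊆ E a nonempty compact convex set. Suppose that for every finite subset {(x_1,x_1*),…,(x_m,x_m*)} of T ∩ (K × E*) there exists x̄ in the convex hull of {x_1,…,x_m} with ⟨x_i* − x*, x_i − x̄⟩ ≥ 0 for all i. Then there exists x̄ ∈ K such that ⟨y* − x*, y − x̄⟩ ≥ 0 for all (y,y*) ∈ T ∩ (K × E*). -/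
/-! Each Minty inequality `⟨y' - z, y - x⟩ ≥ 0` cuts out a closed half-space of `E`. The
hypothesis says that every finitely many of these half-spaces meet inside the convex hull of
their base points, hence inside `K`; compactness of `K` then gives a common point. -/

section MintyHalfspace

variable {E : Type*} [AddCommGroup E] [Module ℝ E] [TopologicalSpace E]

def mintyHalfspace (z : E →L[ℝ] ℝ) (y : E) (y' : E →L[ℝ] ℝ) : Set E :=
  {x | 0 ≤ (y' - z) (y - x)}

theorem isClosed_mintyHalfspace (z : E →L[ℝ] ℝ) (y : E) (y' : E →L[ℝ] ℝ) :
    IsClosed (mintyHalfspace z y y') := by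
  simp only [mintyHalfspace, map_sub]
  exact isClosed_le continuous_const (continuous_const.sub (y' - z).continuous)

theorem exists_mem_forall_mem_mintyHalfspace_of_finset {T : E → Set (E →L[ℝ] ℝ)}
    {z : E →L[ℝ] ℝ} {K : Set E} (hKconv : Convex ℝ K)
    (hfin : ∀ (m : ℕ), 0 < m → ∀ (x : Fin m → E) (x' : Fin m → E →L[ℝ] ℝ),
      (∀ i, x i ∈ K) → (∀ i, x' i ∈ T (x i)) →
      ∃ xb ∈ convexHull ℝ (Set.range x), ∀ i, 0 ≤ (x' i - z) (x i - xb))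
    (t : Finset {p : E × (E →L[ℝ] ℝ) // p.1 ∈ K ∧ p.2 ∈ T p.1}) (ht : t.Nonempty) :
    ∃ xb ∈ K, ∀ p ∈ t, xb ∈ mintyHalfspace z p.1.1 p.1.2 := by
  let e := t.equivFin
  let x : Fin t.card → E := fun i => (e.symm i).1.1.1
  have hxK : ∀ i, x i ∈ K := fun i => (e.symm i).1.2.1
  obtain ⟨xb, hxb, hxb_ineq⟩ := hfin t.card ht.card_pos x (fun i => (e.symm i).1.1.2) hxK
    (fun i => (e.symm i).1.2.2)
  refine ⟨xb, convexHull_min (Set.range_subset_iff.2 hxK) hKconv hxb, fun p hp => ?_⟩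
  simpa [x, mintyHalfspace] using hxb_ineq (e ⟨p, hp⟩)

end MintyHalfspace

theorem minty_finite_to_compact_general {E : Type*} [AddCommGroup E] [Module ℝ E]
    [TopologicalSpace E]
    (T : E → Set (E →L[ℝ] ℝ)) (z : E →L[ℝ] ℝ)
    (K : Set E) (hK : K.Nonempty) (hKc : IsCompact K) (hKconv : Convex ℝ K)
    (hfin : ∀ (m : ℕ), 0 < m → ∀ (x : Fin m → E) (x' : Fin m → E →L[ℝ] ℝ),
      (∀ i, x i ∈ K) → (∀ i, x' i ∈ T (x i)) →
      ∃ xb ∈ convexHull ℝ (Set.range x), ∀ i, 0 ≤ (x' i - z) (x i - xb)) :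
    ∃ xb ∈ K, ∀ y ∈ K, ∀ y' ∈ T y, 0 ≤ (y' - z) (y - xb) := by
  let Γ : {p : E × (E →L[ℝ] ℝ) // p.1 ∈ K ∧ p.2 ∈ T p.1} → Set E :=
    fun p => mintyHalfspace z p.1.1 p.1.2
  have hfip : ∀ t : Finset _, (K ∩ ⋂ p ∈ t, Γ p).Nonempty := by
    intro t
    rcases t.eq_empty_or_nonempty with rfl | ht
    · simpa using hK
    · obtain ⟨xb, hxbK, hxb⟩ := exists_mem_forall_mem_mintyHalfspace_of_finset hKconv hfin t ht
      exact ⟨xb, hxbK, Set.mem_iInter₂.2 hxb⟩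
  obtain ⟨xb, hxbK, hxbΓ⟩ :=
    hKc.inter_iInter_nonempty Γ (fun p => isClosed_mintyHalfspace _ _ _) hfip
  exact ⟨xb, hxbK, fun y hy y' hy' => Set.mem_iInter.1 hxbΓ ⟨(y, y'), hy, hy'⟩⟩

/-- If every finite subsystem of the Minty variational inequality on a nonempty compact
convex set `K` has a solution in the corresponding convex hull, then the full system
has a solution in `K`. -/
theorem minty_finite_to_compact {E : Type*} [AddCommGroup E] [Module ℝ E]
    [TopologicalSpace E] [IsTopologicalAddGroup E] [ContinuousSMul ℝ E]
    (T : E → Set (E →L[ℝ] ℝ)) (z : E →L[ℝ] ℝ)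
    (K : Set E) (hK : K.Nonempty) (hKc : IsCompact K) (hKconv : Convex ℝ K)
    (hfin : ∀ (m : ℕ), 0 < m → ∀ (x : Fin m → E) (x' : Fin m → E →L[ℝ] ℝ),
      (∀ i, x i ∈ K) → (∀ i, x' i ∈ T (x i)) →
      ∃ xb ∈ convexHull ℝ (Set.range x), ∀ i, 0 ≤ (x' i - z) (x i - xb)) :
    ∃ xb ∈ K, ∀ y ∈ K, ∀ y' ∈ T y, 0 ≤ (y' - z) (y - xb) :=
  minty_finite_to_compact_general T z K hK hKc hKconv hfin
end
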